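/- arXiv:2407.06690 — 7 statements merged into one kernel-verified Lean document; each statement's English description precedes it below -/
import Mathlib

section
/- The soft Bellman operator T defined by T(v)(s) = R(s) + (1/η)·log(∑_{s'∈S} P s s' · exp(η·v(s'))) is a non-expansion in the max norm: for all x, y : S → ℝ, max_{s∈S} |T(x)(s) − T(y)(s)| ≤ max_{s∈S} |x(s) − y(s)|. -/
/-- The soft Bellman operator `T v s = R s + (1/η) * log (∑ s', P s s' * exp (η * v s'))`
is a non-expansion in the max norm. -/
theorem soft_bellman_nonexpansion
    {S : Type*} [Fintype S] [Nonempty S]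
    (P : S → S → ℝ) (hP0 : ∀ s s', 0 ≤ P s s') (hP1 : ∀ s, ∑ s', P s s' = 1)
    (R : S → ℝ) (η : ℝ) (hη : 0 < η)
    (T : (S → ℝ) → S → ℝ)
    (hT : ∀ v s, T v s = R s + (1 / η) * Real.log (∑ s', P s s' * Real.exp (η * v s')))
    (x y : S → ℝ) :
    Finset.univ.sup' Finset.univ_nonempty (fun s => |T x s - T y s|) ≤
      Finset.univ.sup' Finset.univ_nonempty (fun s => |x s - y s|) := by
  set M := Finset.univ.sup' Finset.univ_nonempty (fun s => |x s - y s|) with hMdef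
  have hpos : ∀ (s : S) (w : S → ℝ), 0 < ∑ s', P s s' * Real.exp (η * w s') := by
    intro s w
    obtain ⟨s0, hs0⟩ : ∃ s', 0 < P s s' := by
      by_contra h
      push_neg at h
      have hz : ∑ s', P s s' = 0 :=
        Finset.sum_eq_zero fun i _ => le_antisymm (h i) (hP0 s i)
      rw [hP1 s] at hz; norm_num at hz
    refine Finset.sum_pos' (fun i _ => mul_nonneg (hP0 s i) (Real.exp_pos _).le)
      ⟨s0, Finset.mem_univ s0, mul_pos hs0 (Real.exp_pos _)⟩
  have key : ∀ (u v : S → ℝ), (∀ s', u s' - v s' ≤ M) → ∀ s, T u s - T v s ≤ M := by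
    intro u v huv s
    have hA := hpos s u
    have hB := hpos s v
    have hAB : ∑ s', P s s' * Real.exp (η * u s') ≤
        Real.exp (η * M) * ∑ s', P s s' * Real.exp (η * v s') := by
      rw [Finset.mul_sum]
      refine Finset.sum_le_sum fun i _ => ?_
      have : Real.exp (η * u i) ≤ Real.exp (η * M) * Real.exp (η * v i) := by
        rw [← Real.exp_add]
        apply Real.exp_le_exp.2
        nlinarith [huv i]
      calc P s i * Real.exp (η * u i) ≤ P s i * (Real.exp (η * M) * Real.exp (η * v i)) :=
            mul_le_mul_of_nonneg_left this (hP0 s i)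
        _ = Real.exp (η * M) * (P s i * Real.exp (η * v i)) := by ring
    have hlog : Real.log (∑ s', P s s' * Real.exp (η * u s')) ≤
        η * M + Real.log (∑ s', P s s' * Real.exp (η * v s')) := by
      have := Real.log_le_log (by positivity) hAB
      rwa [Real.log_mul (Real.exp_ne_zero _) (ne_of_gt hB), Real.log_exp] at this
    rw [hT u s, hT v s]
    have hηinv : 0 < 1 / η := by positivity
    have : (1 / η) * Real.log (∑ s', P s s' * Real.exp (η * u s')) -
        (1 / η) * Real.log (∑ s', P s s' * Real.exp (η * v s')) ≤ (1 / η) * (η * M) := by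
      rw [← mul_sub]
      exact mul_le_mul_of_nonneg_left (by linarith) hηinv.le
    have hfield : (1 / η) * (η * M) = M := by field_simp
    linarith [this, hfield ▸ this]
  apply Finset.sup'_le
  intro s _
  rw [abs_sub_le_iff]
  constructor
  · exact key x y (fun s' => (abs_le.1 (Finset.le_sup' (fun t => |x t - y t|) (Finset.mem_univ s'))).2.trans_eq' (by rfl)) s |>.trans_eq (by rfl)
  · refine key y x (fun s' => ?_) s
    have := Finset.le_sup' (fun t => |x t - y t|) (Finset.mem_univ s')
    have := abs_le.1 this
    linarith
end

section
/- Let S_i ⊆ S and ρ ∈ ℝ, and assume the matrix I − A_i(ρ) is invertible. If z : S → ℝ satisfies the exponentiated average-reward Bellman equation z(s) = exp(η·(R(s) − ρ))·∑_{s'∈S} P s s' · z(s') at every s ∈ S_i, then any z_i : S_i → ℝ that solves the subtask Bellman equation for (S_i, ρ, b) with boundary values b equal to the restriction of z to T_i must satisfy z_i(s) = z(s) for all s ∈ S_i; in particular, the subtask solution with these boundary values is unique and equals the restriction of z to S_i. -/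
/-- If `I - A_i(ρ)` is invertible and `z` satisfies the exponentiated
average-reward Bellman equation on `S_i`, then any solution of the subtask
Bellman equation for `(S_i, ρ, b)` with boundary values given by the
restriction of `z` to `T_i` coincides with `z` on `S_i`. -/
theorem subtask_solution_unique_eq_restriction
    {S : Type*} [Fintype S] [Nonempty S] [DecidableEq S]
    (P : S → S → ℝ) (hP0 : ∀ s s', 0 ≤ P s s') (hP1 : ∀ s, ∑ s', P s s' = 1)
    (R : S → ℝ) (η : ℝ) (hη : 0 < η)
    (Si Ti : Finset S)
    (hTi : ∀ s', s' ∈ Ti ↔ s' ∉ Si ∧ ∃ s ∈ Si, 0 < P s s')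
    (ρ : ℝ)
    (hinv : IsUnit
      (1 - Matrix.of (fun s s' : ↥Si => Real.exp (η * (R s - ρ)) * P s s')
        : Matrix ↥Si ↥Si ℝ))
    (z : S → ℝ)
    (hz : ∀ s ∈ Si, z s = Real.exp (η * (R s - ρ)) * ∑ s', P s s' * z s')
    (zi : ↥Si → ℝ)
    (hzi : ∀ s : ↥Si, zi s = Real.exp (η * (R s - ρ)) *
        ((∑ s' : ↥Si, P s s' * zi s') + ∑ τ : ↥Ti, P s τ * z τ)) :
    ∀ s : ↥Si, zi s = z s := by
  classical
  set A : Matrix ↥Si ↥Si ℝ :=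
    Matrix.of (fun s s' : ↥Si => Real.exp (η * (R s - ρ)) * P s s') with hA
  set w : ↥Si → ℝ := fun s => zi s - z s with hw
  -- z satisfies the subtask equation as well
  have hzsplit : ∀ s : ↥Si, z s = Real.exp (η * (R (s : S) - ρ)) *
      ((∑ s' : ↥Si, P s s' * z s') + ∑ τ : ↥Ti, P s τ * z τ) := by
    intro s
    rw [hz s s.2]
    congr 1
    have hdisj : Disjoint Si Ti := by
      rw [Finset.disjoint_left]
      intro a ha hna
      exact ((hTi a).mp hna).1 ha
    have hvanish : ∀ s' ∈ Finset.univ, s' ∉ Si ∪ Ti → P (s : S) s' * z s' = 0 := by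
      intro s' _ hs'
      rw [Finset.mem_union] at hs'
      push_neg at hs'
      have h0 : P (s : S) s' = 0 := by
        by_contra h
        have hpos : 0 < P (s : S) s' := lt_of_le_of_ne (hP0 _ _) (Ne.symm h)
        exact hs'.2 ((hTi s').mpr ⟨hs'.1, ⟨(s : S), s.2, hpos⟩⟩)
      rw [h0, zero_mul]
    calc ∑ s', P (s : S) s' * z s'
        = ∑ s' ∈ Si ∪ Ti, P (s : S) s' * z s' :=
          (Finset.sum_subset (Finset.subset_univ _) hvanish).symm
      _ = (∑ s' ∈ Si, P (s : S) s' * z s') + ∑ τ ∈ Ti, P (s : S) τ * z τ :=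
          Finset.sum_union hdisj
      _ = (∑ s' : ↥Si, P (s : S) s' * z s') + ∑ τ : ↥Ti, P (s : S) τ * z τ := by
          rw [← Finset.sum_coe_sort Si, ← Finset.sum_coe_sort Ti]
  -- (1 - A) w = 0
  have hMw : (1 - A).mulVec w = 0 := by
    funext s
    have hcalc : w s = ∑ s' : ↥Si, Real.exp (η * (R (s : S) - ρ)) * P s s' * w s' := by
      have : w s = Real.exp (η * (R (s : S) - ρ)) * ∑ s' : ↥Si, P s s' * w s' := by
        simp only [hw]
        rw [hzi s, hzsplit s, ← mul_sub]
        congr 1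
        rw [add_sub_add_right_eq_sub, ← Finset.sum_sub_distrib]
        congr 1; funext s'; ring
      rw [this, Finset.mul_sum]
      congr 1; funext s'; ring
    rw [Matrix.sub_mulVec]
    simp only [Pi.sub_apply, Matrix.one_mulVec, Pi.zero_apply]
    simp only [Matrix.mulVec, dotProduct, hA, Matrix.of_apply]
    rw [sub_eq_zero]
    exact hcalc
  obtain ⟨u, hu⟩ := hinv
  have hw0 : w = 0 := by
    have h2 : (↑u⁻¹ : Matrix ↥Si ↥Si ℝ).mulVec ((1 - A).mulVec w) = 0 := by
      rw [hMw, Matrix.mulVec_zero]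
    rwa [Matrix.mulVec_mulVec, ← hu, Units.inv_mul, Matrix.one_mulVec] at h2
  intro s
  have := congrFun hw0 s
  simpa [hw, sub_eq_zero] using this
end

section
/- Let S_i ⊆ S with terminal set T_i and ρ ∈ ℝ. Suppose that for each τ ∈ T_i, the base function z^τ : S_i → ℝ solves the subtask Bellman equation for (S_i, ρ, e_τ), where e_τ : T_i → ℝ is the indicator boundary function with e_τ(τ) = 1 and e_τ(τ') = 0 for τ' ≠ τ. Then for any weights w : T_i → ℝ, the linear combination s ↦ ∑_{τ∈T_i} w(τ)·z^τ(s) solves the subtask Bellman equation for (S_i, ρ, w). -/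
/-- If each base function `z^τ` solves the subtask Bellman equation for
`(S_i, ρ, e_τ)` with indicator boundary `e_τ`, then for any weights
`w : T_i → ℝ`, the linear combination `s ↦ ∑ τ, w τ * z^τ s` solves the
subtask Bellman equation for `(S_i, ρ, w)`. -/
theorem subtask_compositionality_of_bases
    {S : Type*} [Fintype S] [Nonempty S] [DecidableEq S]
    (P : S → S → ℝ) (hP0 : ∀ s s', 0 ≤ P s s') (hP1 : ∀ s, ∑ s', P s s' = 1)
    (R : S → ℝ) (η : ℝ) (hη : 0 < η)
    (Si Ti : Finset S)
    (hTi : ∀ s', s' ∈ Ti ↔ s' ∉ Si ∧ ∃ s ∈ Si, 0 < P s s')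
    (ρ : ℝ)
    (zb : ↥Ti → ↥Si → ℝ)
    (hzb : ∀ τ : ↥Ti, ∀ s : ↥Si,
      zb τ s = Real.exp (η * (R s - ρ)) *
        ((∑ s' : ↥Si, P s s' * zb τ s') +
          ∑ τ' : ↥Ti, P s τ' * (if τ' = τ then (1 : ℝ) else 0)))
    (w : ↥Ti → ℝ) :
    ∀ s : ↥Si,
      (∑ τ : ↥Ti, w τ * zb τ s) = Real.exp (η * (R s - ρ)) *
        ((∑ s' : ↥Si, P s s' * ∑ τ : ↥Ti, w τ * zb τ s') +
          ∑ τ : ↥Ti, P s τ * w τ) := by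
  intro s
  have key : ∀ τ : ↥Ti, ∑ τ' : ↥Ti, P s τ' * (if τ' = τ then (1:ℝ) else 0) = P s τ := by
    intro τ; simp
  rw [Finset.sum_congr rfl fun τ _ => by rw [hzb τ s, key]]
  simp only [mul_add, Finset.mul_sum, Finset.sum_add_distrib]
  congr 1
  · rw [Finset.sum_comm]
    exact Finset.sum_congr rfl fun τ _ => Finset.sum_congr rfl fun s' _ => by ring
  · exact Finset.sum_congr rfl fun τ _ => by ring
end

section
/- Strict monotonicity of the first-exit value in the gain estimate: let ε > 0 and ρ̂ ∈ ℝ, and suppose the series defining z(·; ρ̂ − ε) converges entrywise. Then the series defining z(·; ρ̂) also converges entrywise, and for every interior state s ∈ S, z(s; ρ̂ − ε) ≥ exp(η·ε)·z(s; ρ̂); moreover, for every s with z(s; ρ̂) > 0, z(s; ρ̂ − ε) > z(s; ρ̂). In particular, the value z(s; ·) is strictly decreasing in the gain parameter at every state with positive value. -/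
open Matrix
/-- Strict monotonicity of the first-exit value in the gain estimate: if the
Neumann series defining `z(·; ρ̂ - ε)` converges entrywise, then so does the one
defining `z(·; ρ̂)`, and `z(s; ρ̂ - ε) ≥ exp (η ε) * z(s; ρ̂)` for every interior
state `s`; moreover `z(s; ρ̂ - ε) > z(s; ρ̂)` whenever `z(s; ρ̂) > 0`. -/
theorem first_exit_value_strict_monotone_in_gain
    {S Tm : Type*} [Fintype S] [Nonempty S] [DecidableEq S] [Fintype Tm]
    (P : S → S ⊕ Tm → ℝ)
    (hP0 : ∀ s u, 0 ≤ P s u) (hP1 : ∀ s, ∑ u, P s u = 1)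
    (R : S → ℝ) (η : ℝ) (hη : 0 < η)
    (b : Tm → ℝ) (hb : ∀ τ, 0 ≤ b τ)
    (A : ℝ → Matrix S S ℝ)
    (hA : ∀ ρ s s', A ρ s s' = Real.exp (η * (R s - ρ)) * P s (Sum.inl s'))
    (c : ℝ → S → ℝ)
    (hc : ∀ ρ s, c ρ s = Real.exp (η * (R s - ρ)) * ∑ τ, P s (Sum.inr τ) * b τ)
    (ε : ℝ) (hε : 0 < ε) (ρhat : ℝ)
    (hconv : ∀ s, Summable (fun n : ℕ => ((A (ρhat - ε)) ^ n *ᵥ c (ρhat - ε)) s)) :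
    (∀ s, Summable (fun n : ℕ => ((A ρhat) ^ n *ᵥ c ρhat) s)) ∧
    (∀ s : S, Real.exp (η * ε) * ∑' n : ℕ, ((A ρhat) ^ n *ᵥ c ρhat) s
        ≤ ∑' n : ℕ, ((A (ρhat - ε)) ^ n *ᵥ c (ρhat - ε)) s) ∧
    (∀ s : S, 0 < ∑' n : ℕ, ((A ρhat) ^ n *ᵥ c ρhat) s →
        ∑' n : ℕ, ((A ρhat) ^ n *ᵥ c ρhat) s
          < ∑' n : ℕ, ((A (ρhat - ε)) ^ n *ᵥ c (ρhat - ε)) s) := by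
  set k : ℝ := Real.exp (η * ε) with hk_def
  have hk1 : 1 < k := by
    have : 0 < η * ε := mul_pos hη hε
    exact Real.one_lt_exp_iff.mpr this
  have hk0 : 0 < k := lt_trans one_pos hk1
  have hAeq : A (ρhat - ε) = k • A ρhat := by
    ext s s'
    rw [Matrix.smul_apply, hA, hA, smul_eq_mul, ← mul_assoc, hk_def, ← Real.exp_add]
    ring_nf
  have hceq : c (ρhat - ε) = k • c ρhat := by
    funext s
    rw [Pi.smul_apply, hc, hc, smul_eq_mul, ← mul_assoc, hk_def, ← Real.exp_add]
    ring_nf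
  have hterm : ∀ (n : ℕ) (s : S),
      ((A (ρhat - ε)) ^ n *ᵥ c (ρhat - ε)) s = k ^ (n + 1) * ((A ρhat) ^ n *ᵥ c ρhat) s := by
    intro n s
    rw [hAeq, hceq, smul_pow, Matrix.smul_mulVec, Matrix.mulVec_smul]
    simp [Pi.smul_apply, smul_eq_mul, pow_succ]
    ring
  -- nonnegativity of the terms
  have hcnn : ∀ s, 0 ≤ c ρhat s := by
    intro s
    rw [hc]
    exact mul_nonneg (Real.exp_nonneg _)
      (Finset.sum_nonneg fun τ _ => mul_nonneg (hP0 _ _) (hb τ))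
  have hAnn : ∀ s s', 0 ≤ A ρhat s s' := by
    intro s s'
    rw [hA]
    exact mul_nonneg (Real.exp_nonneg _) (hP0 _ _)
  have hxnn : ∀ (n : ℕ) (s : S), 0 ≤ ((A ρhat) ^ n *ᵥ c ρhat) s := by
    intro n
    induction n with
    | zero => intro s; simpa using hcnn s
    | succ n ih =>
      intro s
      rw [pow_succ', ← Matrix.mulVec_mulVec]
      exact Finset.sum_nonneg fun s' _ => mul_nonneg (hAnn s s') (ih s')
  have hsum : ∀ s, Summable (fun n : ℕ => ((A ρhat) ^ n *ᵥ c ρhat) s) := by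
    intro s
    apply Summable.of_nonneg_of_le (fun n => hxnn n s) (fun n => ?_) (hconv s)
    rw [hterm]
    nlinarith [hxnn n s, one_le_pow₀ hk1.le (n := n + 1)]
  refine ⟨hsum, ?_, ?_⟩
  · intro s
    have h1 : Summable (fun n : ℕ => k * ((A ρhat) ^ n *ᵥ c ρhat) s) :=
      (hsum s).mul_left k
    rw [← tsum_mul_left]
    apply Summable.tsum_le_tsum _ h1 (hconv s)
    intro n
    rw [hterm]
    have hkp : k ≤ k ^ (n + 1) := le_self_pow₀ hk1.le (Nat.succ_ne_zero n)
    nlinarith [hxnn n s]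
  · intro s hs
    have h2 : Real.exp (η * ε) * ∑' n : ℕ, ((A ρhat) ^ n *ᵥ c ρhat) s
        ≤ ∑' n : ℕ, ((A (ρhat - ε)) ^ n *ᵥ c (ρhat - ε)) s := by
      have h1 : Summable (fun n : ℕ => k * ((A ρhat) ^ n *ᵥ c ρhat) s) :=
        (hsum s).mul_left k
      rw [← tsum_mul_left]
      apply Summable.tsum_le_tsum _ h1 (hconv s)
      intro n
      rw [hterm]
      have hkp : k ≤ k ^ (n + 1) := le_self_pow₀ hk1.le (Nat.succ_ne_zero n)
      nlinarith [hxnn n s]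
    nlinarith
end

section
/- Fixed-point equation on exit states (forward direction): let {S_1, …, S_L} be a partition of S, let T_i be the terminal set of S_i, let E = ⋃_i T_i be the set of exit states, and fix a gain ρ̂ ∈ ℝ. Suppose for each i that I − A_i(ρ̂) is invertible and that for each τ ∈ T_i the base function z_i^τ : S_i → ℝ solves the subtask Bellman equation for (S_i, ρ̂, e_τ) with indicator boundary e_τ. If z : S → ℝ satisfies z(s) = exp(η·(R(s) − ρ̂))·∑_{s'∈S} P s s' · z(s') for all s ∈ S, then for every i and every s ∈ S_i, z(s) = ∑_{τ∈T_i} z(τ)·z_i^τ(s); in particular, the restriction of z to E satisfies, for every exit s ∈ E lying in partition cell S_{i(s)}, the equation z(s) = ∑_{τ∈T_{i(s)}} z(τ)·z_{i(s)}^τ(s). -/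
/-- Fixed-point equation on exit states (forward direction): if `z` satisfies
the exponentiated Bellman equation with gain estimate `ρ̂` on all of `S`, then
on each partition cell `S_i` the value `z` is the composition of the base
functions weighted by the values of `z` at the terminal states `T_i`; in
particular this equation holds at every exit state. -/
theorem exit_fixed_point_forward
    {S : Type*} [Fintype S] [Nonempty S] [DecidableEq S]
    (P : S → S → ℝ) (hP0 : ∀ s s', 0 ≤ P s s') (hP1 : ∀ s, ∑ s', P s s' = 1)
    (R : S → ℝ) (η : ℝ) (hη : 0 < η)
    (L : ℕ) (Si : Fin L → Finset S)
    (hdisj : ∀ i j, i ≠ j → Disjoint (Si i) (Si j))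
    (hcover : ∀ s : S, ∃ i, s ∈ Si i)
    (Ti : Fin L → Finset S)
    (hTi : ∀ i s', s' ∈ Ti i ↔ s' ∉ Si i ∧ ∃ s ∈ Si i, 0 < P s s')
    (E : Finset S) (hE : ∀ s, s ∈ E ↔ ∃ i, s ∈ Ti i)
    (ρhat : ℝ)
    (hinv : ∀ i, IsUnit
      (1 - Matrix.of (fun s s' : ↥(Si i) => Real.exp (η * (R s - ρhat)) * P s s')
        : Matrix ↥(Si i) ↥(Si i) ℝ))
    (zb : ∀ i, ↥(Ti i) → ↥(Si i) → ℝ)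
    (hzb : ∀ i, ∀ τ : ↥(Ti i), ∀ s : ↥(Si i),
      zb i τ s = Real.exp (η * (R s - ρhat)) *
        ((∑ s' : ↥(Si i), P s s' * zb i τ s') +
          ∑ τ' : ↥(Ti i), P s τ' * (if τ' = τ then (1 : ℝ) else 0)))
    (z : S → ℝ)
    (hz : ∀ s, z s = Real.exp (η * (R s - ρhat)) * ∑ s', P s s' * z s') :
    (∀ i, ∀ s : ↥(Si i), z s = ∑ τ : ↥(Ti i), z τ * zb i τ s) ∧
    (∀ i, ∀ s : ↥(Si i), (s : S) ∈ E →
      z s = ∑ τ : ↥(Ti i), z τ * zb i τ s) := by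
  have main : ∀ i, ∀ s : ↥(Si i), z s = ∑ τ : ↥(Ti i), z τ * zb i τ s := by
    intro i
    set A : Matrix ↥(Si i) ↥(Si i) ℝ :=
      Matrix.of (fun s s' : ↥(Si i) => Real.exp (η * (R s - ρhat)) * P s s') with hA
    set w : ↥(Si i) → ℝ := fun s => z s - ∑ τ : ↥(Ti i), z τ * zb i τ s with hw
    have hdisj' : Disjoint (Si i) (Ti i) := by
      rw [Finset.disjoint_left]
      intro a ha hT
      exact ((hTi i a).mp hT).1 ha
    have hsplit : ∀ s : ↥(Si i),
        (∑ s', P (s : S) s' * z s')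
          = (∑ s' : ↥(Si i), P (s : S) s' * z s') + ∑ τ : ↥(Ti i), P (s : S) τ * z τ := by
      intro s
      have h1 : (∑ s', P (s : S) s' * z s')
          = ∑ s' ∈ Si i ∪ Ti i, P (s : S) s' * z s' := by
        refine (Finset.sum_subset (Finset.subset_univ _) ?_).symm
        intro x _ hx
        have hx1 : x ∉ Si i := fun h => hx (Finset.mem_union_left _ h)
        have hx2 : x ∉ Ti i := fun h => hx (Finset.mem_union_right _ h)
        have hnp : ¬ (0 < P (s : S) x) := fun hpos =>
          hx2 ((hTi i x).mpr ⟨hx1, ⟨(s : S), s.2, hpos⟩⟩)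
        have h0 : P (s : S) x = 0 := le_antisymm (not_lt.mp hnp) (hP0 _ _)
        simp [h0]
      rw [h1, Finset.sum_union hdisj',
        ← Finset.sum_coe_sort (Si i), ← Finset.sum_coe_sort (Ti i)]
    have hweq : ∀ s : ↥(Si i), w s = ∑ s' : ↥(Si i), A s s' * w s' := by
      intro s
      have hz' := hz (s : S)
      rw [hsplit s] at hz'
      have hzb' : (∑ τ : ↥(Ti i), z τ * zb i τ s)
          = Real.exp (η * (R s - ρhat)) *
            ((∑ s' : ↥(Si i), P (s : S) s' * ∑ τ : ↥(Ti i), z τ * zb i τ s')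
              + ∑ τ : ↥(Ti i), P (s : S) τ * z τ) := by
        have hcol : ∀ τ : ↥(Ti i),
            (∑ τ' : ↥(Ti i), P (s : S) τ' * (if τ' = τ then (1 : ℝ) else 0))
              = P (s : S) τ := by
          intro τ
          simp [mul_ite]
        calc (∑ τ : ↥(Ti i), z τ * zb i τ s)
            = ∑ τ : ↥(Ti i), z τ * (Real.exp (η * (R s - ρhat)) *
                ((∑ s' : ↥(Si i), P (s : S) s' * zb i τ s') + P (s : S) τ)) := by
              refine Finset.sum_congr rfl fun τ _ => ?_
              rw [hzb i τ s, hcol τ]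
          _ = Real.exp (η * (R s - ρhat)) *
              ((∑ τ : ↥(Ti i), ∑ s' : ↥(Si i), z τ * (P (s : S) s' * zb i τ s'))
                + ∑ τ : ↥(Ti i), z τ * P (s : S) τ) := by
              rw [← Finset.sum_add_distrib, Finset.mul_sum]
              refine Finset.sum_congr rfl fun τ _ => ?_
              rw [← Finset.mul_sum]
              ring
          _ = Real.exp (η * (R s - ρhat)) *
              ((∑ s' : ↥(Si i), P (s : S) s' * ∑ τ : ↥(Ti i), z τ * zb i τ s')
                + ∑ τ : ↥(Ti i), P (s : S) τ * z τ) := by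
              rw [Finset.sum_comm]
              congr 2
              · refine Finset.sum_congr rfl fun s' _ => ?_
                rw [Finset.mul_sum]
                refine Finset.sum_congr rfl fun τ _ => ?_
                ring
              · exact Finset.sum_congr rfl fun τ _ => mul_comm _ _
      have : w s = Real.exp (η * (R s - ρhat)) *
          (∑ s' : ↥(Si i), P (s : S) s' * w s') := by
        simp only [hw]
        rw [hz', hzb']
        rw [← mul_sub]
        congr 1
        rw [add_sub_add_right_eq_sub, ← Finset.sum_sub_distrib]
        exact Finset.sum_congr rfl fun s' _ => (mul_sub _ _ _).symm
      rw [this, Finset.mul_sum]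
      refine Finset.sum_congr rfl fun s' _ => ?_
      simp only [hA, Matrix.of_apply]
      ring
    have hmv : (1 - A).mulVec w = 0 := by
      funext s
      rw [Matrix.sub_mulVec, Matrix.one_mulVec]
      simp only [Pi.sub_apply, Pi.zero_apply]
      rw [sub_eq_zero, hweq s]
      rfl
    have hw0 : w = 0 := by
      obtain ⟨u, hu⟩ := hinv i
      have h1 : (↑u⁻¹ : Matrix ↥(Si i) ↥(Si i) ℝ) * (1 - A) = 1 := by
        rw [← hu]; exact u.inv_mul
      calc w = Matrix.mulVec 1 w := (Matrix.one_mulVec w).symm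
        _ = ((↑u⁻¹ : Matrix ↥(Si i) ↥(Si i) ℝ) * (1 - A)).mulVec w := by rw [h1]
        _ = (↑u⁻¹ : Matrix ↥(Si i) ↥(Si i) ℝ).mulVec ((1 - A).mulVec w) := by
              rw [Matrix.mulVec_mulVec]
        _ = 0 := by rw [hmv, Matrix.mulVec_zero]
    intro s
    have := congrFun hw0 s
    simp only [hw, Pi.zero_apply] at this
    linarith
  exact ⟨main, fun i s _ => main i s⟩
end

section
/- Fixed-point equation on exit states (converse direction): let {S_1, …, S_L} be a partition of S, let T_i be the terminal set of S_i, let E = ⋃_i T_i, and fix a gain ρ̂ ∈ ℝ. Suppose for each i and each τ ∈ T_i the base function z_i^τ : S_i → ℝ solves the subtask Bellman equation for (S_i, ρ̂, e_τ) with indicator boundary e_τ. If y : E → ℝ satisfies y(s) = ∑_{τ∈T_{i(s)}} y(τ)·z_{i(s)}^τ(s) for every exit s ∈ E (where i(s) is the index of the partition cell containing s), then the extension ẑ : S → ℝ defined by ẑ(s) = ∑_{τ∈T_{i(s)}} y(τ)·z_{i(s)}^τ(s) agrees with y on E and satisfies the exponentiated Bellman equation ẑ(s) = exp(η·(R(s)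 − ρ̂))·∑_{s'∈S} P s s' · ẑ(s') for all s ∈ S. -/
/-- Fixed-point equation on exit states (converse direction): if `y` satisfies
the exit fixed-point equation on the set of exit states `E`, then the
compositional extension `ẑ` of `y` to all of `S` agrees with `y` on `E` and
satisfies the exponentiated Bellman equation with gain estimate `ρ̂` on all of
`S`. -/
theorem exit_fixed_point_converse
    {S : Type*} [Fintype S] [Nonempty S] [DecidableEq S]
    (P : S → S → ℝ) (hP0 : ∀ s s', 0 ≤ P s s') (hP1 : ∀ s, ∑ s', P s s' = 1)
    (R : S → ℝ) (η : ℝ) (hη : 0 < η)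
    (L : ℕ) (Si : Fin L → Finset S)
    (hdisj : ∀ i j, i ≠ j → Disjoint (Si i) (Si j))
    (idx : S → Fin L) (hidx : ∀ s, s ∈ Si (idx s))
    (Ti : Fin L → Finset S)
    (hTi : ∀ i s', s' ∈ Ti i ↔ s' ∉ Si i ∧ ∃ s ∈ Si i, 0 < P s s')
    (E : Finset S) (hE : ∀ s, s ∈ E ↔ ∃ i, s ∈ Ti i)
    (ρhat : ℝ)
    (zb : ∀ i, ↥(Ti i) → ↥(Si i) → ℝ)
    (hzb : ∀ i, ∀ τ : ↥(Ti i), ∀ s : ↥(Si i),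
      zb i τ s = Real.exp (η * (R s - ρhat)) *
        ((∑ s' : ↥(Si i), P s s' * zb i τ s') +
          ∑ τ' : ↥(Ti i), P s τ' * (if τ' = τ then (1 : ℝ) else 0)))
    (y : S → ℝ)
    (hy : ∀ s ∈ E, y s = ∑ τ : ↥(Ti (idx s)), y τ * zb (idx s) τ ⟨s, hidx s⟩)
    (zhat : S → ℝ)
    (hzhat : ∀ s : S,
      zhat s = ∑ τ : ↥(Ti (idx s)), y τ * zb (idx s) τ ⟨s, hidx s⟩) :
    (∀ s ∈ E, zhat s = y s) ∧
    (∀ s : S, zhat s = Real.exp (η * (R s - ρhat)) * ∑ s', P s s' * zhat s') := by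

  have hidxu : ∀ (i : Fin L) (s : S), s ∈ Si i → idx s = i := by
    intro i s hs
    by_contra h
    exact absurd hs (Finset.disjoint_left.mp (hdisj _ _ h) (hidx s))
  have hagree : ∀ s ∈ E, zhat s = y s := by
    intro s hs
    rw [hzhat s, ← hy s hs]
  refine ⟨hagree, fun s => ?_⟩
  have hz2 : ∀ (i : Fin L) (s' : S) (h : s' ∈ Si i),
      zhat s' = ∑ τ : ↥(Ti i), y τ * zb i τ ⟨s', h⟩ := by
    intro i s' h
    have hh := hidxu i s' h
    subst hh
    exact hzhat s'
  set i := idx s with hi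
  have hsSi : s ∈ Si i := hidx s
  have hTy : ∀ τ ∈ Ti i, zhat τ = y τ := fun τ hτ => hagree τ ((hE τ).2 ⟨i, hτ⟩)
  have hzero : ∀ s' : S, s' ∉ Si i → s' ∉ Ti i → P s s' = 0 := by
    intro s' h1 h2
    by_contra h
    exact h2 ((hTi i s').2 ⟨h1, s, hsSi, lt_of_le_of_ne (hP0 s s') (Ne.symm h)⟩)
  have hdisjST : Disjoint (Si i) (Ti i) := by
    rw [Finset.disjoint_right]
    intro a ha
    exact ((hTi i a).1 ha).1
  have key : ∑ s', P s s' * zhat s' =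
      ∑ τ : ↥(Ti i), y τ * ((∑ s' : ↥(Si i), P s (↑s') * zb i τ s') +
        ∑ τ' : ↥(Ti i), P s (↑τ') * (if τ' = τ then (1 : ℝ) else 0)) := by
    have hsplit : ∑ s', P s s' * zhat s' =
        ∑ s' ∈ Si i ∪ Ti i, P s s' * zhat s' := by
      refine (Finset.sum_subset (Finset.subset_univ _) ?_).symm
      intro x _ hx
      rw [Finset.mem_union] at hx
      push_neg at hx
      rw [hzero x hx.1 hx.2, zero_mul]
    rw [hsplit, Finset.sum_union hdisjST]
    have h1 : ∑ s' ∈ Si i, P s s' * zhat s' =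
        ∑ τ : ↥(Ti i), y τ * ∑ s' : ↥(Si i), P s (↑s') * zb i τ s' := by
      rw [← Finset.sum_coe_sort (Si i) (fun s' => P s s' * zhat s')]
      have hterm : ∀ s' : ↥(Si i), P s ↑s' * zhat ↑s' =
          ∑ τ : ↥(Ti i), y ↑τ * (P s ↑s' * zb i τ s') := by
        intro s'
        rw [hz2 i (↑s') s'.2, Finset.mul_sum]
        exact Finset.sum_congr rfl fun τ _ => by ring
      rw [Finset.sum_congr rfl fun s' _ => hterm s', Finset.sum_comm]
      exact Finset.sum_congr rfl fun τ _ => (Finset.mul_sum _ _ _).symm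
    have h2 : ∑ τ' ∈ Ti i, P s τ' * zhat τ' =
        ∑ τ : ↥(Ti i), y τ * ∑ τ' : ↥(Ti i), P s (↑τ') * (if τ' = τ then (1 : ℝ) else 0) := by
      rw [← Finset.sum_coe_sort (Ti i) (fun τ' => P s τ' * zhat τ')]
      refine Finset.sum_congr rfl fun τ _ => ?_
      rw [hTy (↑τ) τ.2]
      simp [Finset.sum_ite_eq', mul_comm]
    rw [h1, h2, ← Finset.sum_add_distrib]
    exact Finset.sum_congr rfl fun τ _ => by ring
  rw [hz2 i s hsSi, key, Finset.mul_sum]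
  refine Finset.sum_congr rfl fun τ _ => ?_
  rw [hzb i τ ⟨s, hsSi⟩]
  ring
end

section
/- Correctness of the binary-search test when the gain estimate is too large: fix a reference state s* ∈ S and let S' = S \ {s*}; for ρ̂ ∈ ℝ define the S' × S' matrix A(ρ̂) by A(ρ̂)(s, s') = exp(η·(R(s) − ρ̂))·P s s' and the vector c(ρ̂) by c(ρ̂)(s) = exp(η·(R(s) − ρ̂))·P s s*. Suppose z : S → ℝ satisfies z(s) ≥ 0 for all s, z(s*) = 1, and the eigenvalue equation exp(η·ρ)·z(s) = exp(η·R(s))·∑_{s'∈S} P s s' · z(s') for all s ∈ S, for some ρ ∈ ℝ. Then for any ρ̂ > ρ: the series ẑ(s) := ∑_{n=0}^∞ (A(ρ̂)^n · c(ρ̂))(s) converges for every s ∈ S', satisfies ẑ(s) ≤ z(s) for all s ∈ S', and the strict inequality exp(η·ρ̂) > exp(η·R(s*))·(∑_{s∈S'} P s* s · ẑ(s) + P s* s*) holds. -/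
/-!
Restricted to `S' = S \ {s*}`, the eigenvector `z` is a supersolution of the first-exit equation:
`A(ρ̂) z + c(ρ̂) = exp (η (ρ - ρ̂)) z ≤ z`, the entry `z s* = 1` accounting for `c(ρ̂)`.
Since `A(ρ̂)` is entrywise nonnegative, induction gives `∑_{n<N} A(ρ̂)ⁿ c(ρ̂) ≤ z` for every `N`,
so the Neumann series of nonnegative terms converges and its sum `ẑ` stays below `z`.
Substituting `ẑ ≤ z` into the test quantity bounds it by `exp (η R s*) ∑ P s* s' z s' = exp (η ρ)`,
which is strictly below `exp (η ρ̂)`.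
-/

open Matrix Finset

namespace Matrix

variable {ι : Type*} [Fintype ι] {M : Matrix ι ι ℝ} {v w : ι → ℝ}

lemma mulVec_mono_of_nonneg (hM : ∀ i j, 0 ≤ M i j) : Monotone (M *ᵥ ·) :=
  fun _ _ huw i => Finset.sum_le_sum fun j _ => mul_le_mul_of_nonneg_left (huw j) (hM i j)

lemma mulVec_nonneg_of_nonneg (hM : ∀ i j, 0 ≤ M i j) (hv : 0 ≤ v) : 0 ≤ M *ᵥ v := by
  simpa using mulVec_mono_of_nonneg hM hv

variable [DecidableEq ι]

lemma pow_mulVec_nonneg (hM : ∀ i j, 0 ≤ M i j) (hv : 0 ≤ v) (n : ℕ) : 0 ≤ M ^ n *ᵥ v := by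
  induction n with
  | zero => simpa using hv
  | succ n ih => rw [pow_succ', ← mulVec_mulVec]; exact mulVec_nonneg_of_nonneg hM ih

lemma sum_range_pow_mulVec_le (hM : ∀ i j, 0 ≤ M i j) (hw0 : 0 ≤ w) (hw : M *ᵥ w + v ≤ w)
    (N : ℕ) : ∑ n ∈ range N, M ^ n *ᵥ v ≤ w := by
  induction N with
  | zero => simpa using hw0
  | succ N ih =>
    calc ∑ n ∈ range (N + 1), M ^ n *ᵥ v = M *ᵥ ∑ n ∈ range N, M ^ n *ᵥ v + v := by
          simp only [sum_range_succ', pow_succ', ← mulVec_mulVec, ← mulVec_sum, pow_zero,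
            one_mulVec]
      _ ≤ M *ᵥ w + v := add_le_add_left (mulVec_mono_of_nonneg hM ih) v
      _ ≤ w := hw

lemma summable_pow_mulVec_apply (hM : ∀ i j, 0 ≤ M i j) (hv : 0 ≤ v) (hw0 : 0 ≤ w)
    (hw : M *ᵥ w + v ≤ w) (i : ι) : Summable fun n => (M ^ n *ᵥ v) i :=
  summable_of_sum_range_le (fun n => pow_mulVec_nonneg hM hv n i) fun N => by
    simpa using sum_range_pow_mulVec_le hM hw0 hw N i

lemma tsum_pow_mulVec_apply_le (hM : ∀ i j, 0 ≤ M i j) (hv : 0 ≤ v) (hw0 : 0 ≤ w)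
    (hw : M *ᵥ w + v ≤ w) (i : ι) : ∑' n, (M ^ n *ᵥ v) i ≤ w i :=
  Real.tsum_le_of_sum_range_le (fun n => pow_mulVec_nonneg hM hv n i) fun N => by
    simpa using sum_range_pow_mulVec_le hM hw0 hw N i

end Matrix

lemma exp_mul_sub_mul_sum_eq {S : Type*} [Fintype S] {P : S → S → ℝ} {R : S → ℝ} {η ρ ρhat : ℝ}
    {z : S → ℝ}
    (hz : ∀ s, Real.exp (η * ρ) * z s = Real.exp (η * R s) * ∑ s', P s s' * z s') (s : S) :
    Real.exp (η * (R s - ρhat)) * ∑ s', P s s' * z s' = Real.exp (η * (ρ - ρhat)) * z s := by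
  rw [show η * (R s - ρhat) = -(η * ρhat) + η * R s by ring, Real.exp_add, mul_assoc, ← hz,
    ← mul_assoc, ← Real.exp_add]
  ring_nf

lemma first_exit_mulVec_add_eq {S : Type*} [Fintype S] [DecidableEq S] {P : S → S → ℝ}
    {R : S → ℝ} {η ρ ρhat : ℝ} {sstar : S} {M : Matrix {s // s ≠ sstar} {s // s ≠ sstar} ℝ}
    {v : {s // s ≠ sstar} → ℝ} {z : S → ℝ}
    (hM : ∀ s s', M s s' = Real.exp (η * (R s - ρhat)) * P s s')
    (hv : ∀ s, v s = Real.exp (η * (R s - ρhat)) * P s sstar) (hzstar : z sstar = 1)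
    (hz : ∀ s, Real.exp (η * ρ) * z s = Real.exp (η * R s) * ∑ s', P s s' * z s') :
    (M *ᵥ fun s => z s) + v = Real.exp (η * (ρ - ρhat)) • fun s : {s // s ≠ sstar} => z s := by
  ext s
  rw [Pi.add_apply, Pi.smul_apply, smul_eq_mul, ← exp_mul_sub_mul_sum_eq hz,
    Fintype.sum_eq_add_sum_subtype_ne _ sstar, hzstar, mul_one, mul_add, add_comm, hv,
    mulVec, dotProduct, mul_sum]
  simp only [hM, mul_assoc]

theorem binary_search_test_gain_too_large_general
    {S : Type*} [Fintype S] [DecidableEq S]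
    (P : S → S → ℝ) (hP0 : ∀ s s', 0 ≤ P s s')
    (R : S → ℝ) (η : ℝ) (hη : 0 < η)
    (sstar : S)
    (A : ℝ → Matrix {s : S // s ≠ sstar} {s : S // s ≠ sstar} ℝ)
    (hA : ∀ ρhat (s s' : {s : S // s ≠ sstar}),
      A ρhat s s' = Real.exp (η * (R s - ρhat)) * P s s')
    (c : ℝ → {s : S // s ≠ sstar} → ℝ)
    (hc : ∀ ρhat (s : {s : S // s ≠ sstar}),
      c ρhat s = Real.exp (η * (R s - ρhat)) * P s sstar)
    (z : S → ℝ) (hz0 : ∀ s, 0 ≤ z s) (hzstar : z sstar = 1)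
    (ρ : ℝ)
    (hz : ∀ s, Real.exp (η * ρ) * z s = Real.exp (η * R s) * ∑ s', P s s' * z s')
    (ρhat : ℝ) (hρ : ρ < ρhat) :
    (∀ s : {s : S // s ≠ sstar},
      Summable (fun n : ℕ => ((A ρhat) ^ n *ᵥ c ρhat) s)) ∧
    (∀ s : {s : S // s ≠ sstar},
      (∑' n : ℕ, ((A ρhat) ^ n *ᵥ c ρhat) s) ≤ z s) ∧
    (Real.exp (η * R sstar) *
        ((∑ s : {s : S // s ≠ sstar},
            P sstar s * ∑' n : ℕ, ((A ρhat) ^ n *ᵥ c ρhat) s) + P sstar sstar)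
      < Real.exp (η * ρhat)) := by
  have hA0 : ∀ s s', 0 ≤ A ρhat s s' := fun s s' => by
    rw [hA]; exact mul_nonneg (by positivity) (hP0 _ _)
  have hc0 : 0 ≤ c ρhat := fun s => by
    rw [hc]; exact mul_nonneg (by positivity) (hP0 _ _)
  set w : {s // s ≠ sstar} → ℝ := fun s => z s
  have hw0 : 0 ≤ w := fun s => hz0 s
  have hsuper : A ρhat *ᵥ w + c ρhat ≤ w := by
    rw [first_exit_mulVec_add_eq (hA ρhat) (hc ρhat) hzstar hz]
    exact smul_le_of_le_one_left hw0 (Real.exp_le_one_iff.2 (by nlinarith))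
  have hle := tsum_pow_mulVec_apply_le hA0 hc0 hw0 hsuper
  refine ⟨summable_pow_mulVec_apply hA0 hc0 hw0 hsuper, hle, ?_⟩
  calc _ ≤ Real.exp (η * R sstar) * ∑ s, P sstar s * z s := by
        rw [Fintype.sum_eq_add_sum_subtype_ne _ sstar, hzstar, mul_one, add_comm]
        gcongr with s
        exacts [hP0 _ _, hle s]
    _ = Real.exp (η * ρ) := by rw [← hz, hzstar, mul_one]
    _ < Real.exp (η * ρhat) := Real.exp_lt_exp.2 (mul_lt_mul_of_pos_left hρ hη)

/-- Correctness of the binary-search test when the gain estimate is too large: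
if `z ≥ 0` with `z s* = 1` satisfies the eigenvalue equation with gain `ρ`, and
`ρ̂ > ρ`, then the Neumann series defining the first-exit value `ẑ` on
`S' = S \ {s*}` converges, is bounded above by `z`, and the binary-search test
quantity is strictly smaller than `exp (η ρ̂)`. -/
theorem binary_search_test_gain_too_large
    {S : Type*} [Fintype S] [Nonempty S] [DecidableEq S]
    (P : S → S → ℝ) (hP0 : ∀ s s', 0 ≤ P s s') (hP1 : ∀ s, ∑ s', P s s' = 1)
    (R : S → ℝ) (η : ℝ) (hη : 0 < η)
    (sstar : S)
    (A : ℝ → Matrix {s : S // s ≠ sstar} {s : S // s ≠ sstar} ℝ)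
    (hA : ∀ ρhat (s s' : {s : S // s ≠ sstar}),
      A ρhat s s' = Real.exp (η * (R s - ρhat)) * P s s')
    (c : ℝ → {s : S // s ≠ sstar} → ℝ)
    (hc : ∀ ρhat (s : {s : S // s ≠ sstar}),
      c ρhat s = Real.exp (η * (R s - ρhat)) * P s sstar)
    (z : S → ℝ) (hz0 : ∀ s, 0 ≤ z s) (hzstar : z sstar = 1)
    (ρ : ℝ)
    (hz : ∀ s, Real.exp (η * ρ) * z s = Real.exp (η * R s) * ∑ s', P s s' * z s')
    (ρhat : ℝ) (hρ : ρ < ρhat) :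
    (∀ s : {s : S // s ≠ sstar},
      Summable (fun n : ℕ => ((A ρhat) ^ n *ᵥ c ρhat) s)) ∧
    (∀ s : {s : S // s ≠ sstar},
      (∑' n : ℕ, ((A ρhat) ^ n *ᵥ c ρhat) s) ≤ z s) ∧
    (Real.exp (η * R sstar) *
        ((∑ s : {s : S // s ≠ sstar},
            P sstar s * ∑' n : ℕ, ((A ρhat) ^ n *ᵥ c ρhat) s) + P sstar sstar)
      < Real.exp (η * ρhat)) :=
  binary_search_test_gain_too_large_general P hP0 R η hη sstar A hA c hc z hz0 hzstar ρ hz ρhat hρ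
end
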